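/- With the notation below, λ = ker(π₁) ∩ ker(π₂) ∩ ker(π_β) as subspaces of p₅, where λ := ⁅[X_{1β}],[X_{2β}]⁆ is the Lie ideal of the subalgebra f₃ ⊂ p₅ spanned by brackets of the Lie ideals of f₃ generated by X_{1β} and by X_{2β}. -/

import Mathlib

open scoped BigOperators

/-- The set of strand labels `S = {α, 1, 2, β, ω}` (with `n = 2`). -/
inductive Strand : Type
  | alpha : Strand
  | one : Strand
  | two : Strand
  | beta : Strand
  | omega : Strand
  deriving DecidableEq

instance : Fintype Strand where
  elems := {Strand.alpha, Strand.one, Strand.two, Strand.beta, Strand.omega}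
  complete := fun x => by cases x <;> simp

/-- The free Lie algebra on the generators `X_{ab}`, `a, b ∈ S`, for a label set `S`. -/
abbrev FL (S : Type) : Type := FreeLieAlgebra ℂ (S × S)

noncomputable def XF (S : Type) (a b : S) : FL S := FreeLieAlgebra.of ℂ (a, b)

/-- The defining relations of the Lie algebra of infinitesimal spherical pure braids on the
label set `S`: the diagonal generators `X_{aa}` (we present the algebra using generators
indexed by all ordered pairs, so these are set to zero), the symmetry relations
`X_{ab} = X_{ba}`, the linear relations `Σ_{b ≠ a} X_{ab} = 0`, and the commutation
relations `[X_{ab}, X_{cd}] = 0` for `a, b, c, d` pairwise distinct. -/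
noncomputable def pRel (S : Type) [Fintype S] [DecidableEq S] : Set (FL S) :=
  {w | ∃ a, w = XF S a a} ∪
  {w | ∃ a b, w = XF S a b - XF S b a} ∪
  {w | ∃ a, w = ∑ b ∈ Finset.univ.filter (fun b => b ≠ a), XF S a b} ∪
  {w | ∃ a b c d, a ≠ b ∧ a ≠ c ∧ a ≠ d ∧ b ≠ c ∧ b ≠ d ∧ c ≠ d ∧
    w = ⁅XF S a b, XF S c d⁆}

noncomputable def pIdeal (S : Type) [Fintype S] [DecidableEq S] : LieIdeal ℂ (FL S) :=
  LieSubmodule.lieSpan ℂ (FL S) (pRel S)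

/-- The Lie algebra of infinitesimal spherical pure braids on the label set `S`. -/
abbrev P (S : Type) [Fintype S] [DecidableEq S] : Type := FL S ⧸ pIdeal S

/-- The image `X_{ab}` of a generator. -/
noncomputable def X (S : Type) [Fintype S] [DecidableEq S] (a b : S) : P S :=
  LieSubmodule.Quotient.mk (N := pIdeal S) (XF S a b)

/-- `p₅`, on the label set `S = {α, 1, 2, β, ω}`. -/
abbrev P5 : Type := P Strand

/-- `p₄` on the label set `S ∖ {t}`. -/
abbrev P4 (t : Strand) : Type := P {s : Strand // s ≠ t}

/-- `X_{βω} := X_{α1} + X_{α2} + X_{12}` in `p₅`. -/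
noncomputable def Xbw : P5 :=
  X Strand Strand.alpha Strand.one + X Strand Strand.alpha Strand.two +
    X Strand Strand.one Strand.two

/-- The Lie subalgebra `f₃ ⊂ p₅` generated by `X_{1β}`, `X_{2β}`, `X_{βω}`. -/
noncomputable def f3Sub : LieSubalgebra ℂ P5 :=
  LieSubalgebra.lieSpan ℂ P5
    {X Strand Strand.one Strand.beta, X Strand Strand.two Strand.beta, Xbw}

/-- `X_{1β}` and `X_{2β}` as elements of `f₃`. -/
noncomputable def X1b : ↥f3Sub :=
  ⟨X Strand Strand.one Strand.beta,
    LieSubalgebra.subset_lieSpan (Set.mem_insert _ _)⟩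

noncomputable def X2b : ↥f3Sub :=
  ⟨X Strand Strand.two Strand.beta,
    LieSubalgebra.subset_lieSpan (Set.mem_insert_of_mem _ (Set.mem_insert _ _))⟩

/-- The Lie ideal `λ := ⁅[X_{1β}],[X_{2β}]⁆` of the subalgebra `f₃ ⊂ p₅`. -/
noncomputable def lam : LieIdeal ℂ ↥f3Sub :=
  ⁅(LieSubmodule.lieSpan ℂ ↥f3Sub {X1b} : LieIdeal ℂ ↥f3Sub),
    (LieSubmodule.lieSpan ℂ ↥f3Sub {X2b} : LieIdeal ℂ ↥f3Sub)⁆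


/-!
Forgetting the strand `β` kills exactly the ideal generated by the `X_{βv}`. By the 4T relation
the Lie subalgebra generated by the `X_{βv}` is already an ideal, and it is `f₃` because
`X_{βω} = X_{α1} + X_{α2} + X_{12}` and `X_{αβ} = -(X_{1β} + X_{2β} + X_{βω})`. Hence
`ker π_β = f₃`, the image of the free Lie algebra `F` on `a, b, c`.

On a four-element label set identified with the Klein four-group, `X_{ab}` may be sent to any
function of `a + b` that vanishes at `0` and sums to `0`: complementary pairs have the same sum.
Such morphisms `p₄ → F` turn `π₁` and `π₂` on `f₃` into the endomorphisms of `F` killing `a`,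
resp. `b`, whose kernels are the ideals `(a)` and `(b)`.

Finally `(a) ∩ (b) = ⁅(a), (b)⁆` in `F`: the endomorphism `σ` killing `b` is a retraction with
kernel `(b)` that fixes `a`, and `x - σ x ∈ ⁅(a), (b)⁆` for every `x ∈ (a)`.
-/

namespace LieIdeal

variable {R L L' : Type*} [CommRing R] [LieRing L] [LieAlgebra R L] [LieRing L']
  [LieAlgebra R L']

def mkHom (I : LieIdeal R L) : L →ₗ⁅R⁆ L ⧸ I :=
  { I.toSubmodule.mkQ with map_lie' := rfl }

variable {I : LieIdeal R L}

lemma mkHom_surjective : Function.Surjective I.mkHom :=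
  Submodule.Quotient.mk_surjective _

lemma mkHom_eq_zero {x : L} : I.mkHom x = 0 ↔ x ∈ I :=
  Submodule.Quotient.mk_eq_zero I.toSubmodule

lemma quotient_hom_ext {f g : L ⧸ I →ₗ⁅R⁆ L'} (h : f.comp I.mkHom = g.comp I.mkHom) :
    f = g := by
  ext u
  obtain ⟨x, rfl⟩ := mkHom_surjective u
  exact LieHom.congr_fun h x

def quotientLift (I : LieIdeal R L) (f : L →ₗ⁅R⁆ L') (h : I ≤ f.ker) : L ⧸ I →ₗ⁅R⁆ L' :=
  { I.toSubmodule.liftQ f.toLinearMap (fun x hx => LieHom.mem_ker.1 (h hx)) with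
    map_lie' := by
      rintro ⟨x⟩ ⟨y⟩
      exact f.map_lie x y }

lemma map_lieSpan_le (f : L →ₗ⁅R⁆ L') (s : Set L) :
    map f (LieSubmodule.lieSpan R L s) ≤ LieSubmodule.lieSpan R L' (f '' s) := by
  rw [map_le_iff_le_comap, LieSubmodule.lieSpan_le]
  exact fun x hx => mem_comap.2 (LieSubmodule.subset_lieSpan ⟨x, hx, rfl⟩)

/-- On the ideal generated by `s`, `x - σ x` lies in `⁅lieSpan s, J⁆`, because
`⁅y, x⁆ - σ ⁅y, x⁆ = ⁅y - σ y, x⁆ + ⁅σ y, x - σ x⁆`; on `J` itself `σ` vanishes. -/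
lemma lieSpan_inf_le_lie_of_retraction {σ : L →ₗ⁅R⁆ L} {J : LieIdeal R L} (hJ : J ≤ σ.ker)
    (hσ : ∀ x, x - σ x ∈ J) {s : Set L} (hs : ∀ x ∈ s, σ x = x) :
    LieSubmodule.lieSpan R L s ⊓ J ≤ ⁅LieSubmodule.lieSpan R L s, J⁆ := by
  set I := LieSubmodule.lieSpan R L s
  have key : ∀ x ∈ I, x - σ x ∈ ⁅I, J⁆ := by
    intro x hx
    induction hx using LieSubmodule.lieSpan_induction with
    | mem x hx => simp [hs x hx]
    | zero => simp
    | add x y _ _ hx hy =>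
      rw [map_add, add_sub_add_comm]; exact add_mem hx hy
    | smul r x _ hx => rw [map_smul, ← smul_sub]; exact SMulMemClass.smul_mem r hx
    | lie y x hxI hx =>
      have hsplit : ⁅y, x⁆ - σ ⁅y, x⁆ = ⁅y - σ y, x⁆ + ⁅σ y, x - σ x⁆ := by
        rw [LieHom.map_lie, sub_lie, lie_sub]; abel
      rw [hsplit]
      refine add_mem ?_ (LieSubmodule.lie_mem _ hx)
      rw [← lie_skew]
      exact neg_mem (LieSubmodule.lie_mem_lie hxI (hσ y))
  rintro x ⟨hxI, hxJ⟩
  simpa [LieHom.mem_ker.1 (hJ hxJ)] using key x hxI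

end LieIdeal

namespace FreeLieAlgebra

variable {R ι : Type*} [CommRing R]

lemma lieSpan_range_of :
    LieSubalgebra.lieSpan R (FreeLieAlgebra R ι) (Set.range (of R)) = ⊤ := by
  set K := LieSubalgebra.lieSpan R (FreeLieAlgebra R ι) (Set.range (of R))
  let g : FreeLieAlgebra R ι →ₗ⁅R⁆ K :=
    lift R fun i => ⟨of R i, LieSubalgebra.subset_lieSpan ⟨i, rfl⟩⟩
  have hg : K.incl.comp g = LieHom.id := hom_ext fun i => by simp [g]
  refine eq_top_iff.2 fun x _ => ?_
  have hx : K.incl (g x) = x := LieHom.congr_fun hg x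
  exact hx ▸ (g x).2

variable [DecidableEq ι]

noncomputable def killGen (i : ι) : FreeLieAlgebra R ι →ₗ⁅R⁆ FreeLieAlgebra R ι :=
  lift R (Function.update (of R) i 0)

lemma killGen_of_self (i : ι) : killGen (R := R) i (of R i) = 0 := by
  simp [killGen]

lemma killGen_of_ne {i j : ι} (h : j ≠ i) : killGen (R := R) i (of R j) = of R j := by
  simp [killGen, h]

lemma sub_killGen_mem (i : ι) (x : FreeLieAlgebra R ι) :
    x - killGen i x ∈ LieSubmodule.lieSpan R (FreeLieAlgebra R ι) {of R i} := by
  set J : LieIdeal R (FreeLieAlgebra R ι) := LieSubmodule.lieSpan R _ {of R i}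
  have h : J.mkHom.comp (killGen i) = J.mkHom := hom_ext fun j => by
    rcases eq_or_ne j i with rfl | hj
    · rw [LieHom.comp_apply, killGen_of_self, map_zero, eq_comm, LieIdeal.mkHom_eq_zero]
      exact LieSubmodule.subset_lieSpan rfl
    · rw [LieHom.comp_apply, killGen_of_ne hj]
  rw [← LieIdeal.mkHom_eq_zero, map_sub, ← LieHom.comp_apply, h, sub_self]

lemma ker_killGen (i : ι) :
    (killGen (R := R) i).ker = LieSubmodule.lieSpan R (FreeLieAlgebra R ι) {of R i} := by
  refine le_antisymm (fun x hx => ?_) ?_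
  · simpa [LieHom.mem_ker.1 hx] using sub_killGen_mem i x
  · rw [LieSubmodule.lieSpan_le, Set.singleton_subset_iff]
    exact LieHom.mem_ker.2 (killGen_of_self i)

lemma lieSpan_of_inf_le_lie {i j : ι} (h : i ≠ j) :
    LieSubmodule.lieSpan R (FreeLieAlgebra R ι) {of R i} ⊓ LieSubmodule.lieSpan R _ {of R j} ≤
      ⁅LieSubmodule.lieSpan R (FreeLieAlgebra R ι) {of R i},
        LieSubmodule.lieSpan R (FreeLieAlgebra R ι) {of R j}⁆ :=
  LieIdeal.lieSpan_inf_le_lie_of_retraction (ker_killGen j).ge (sub_killGen_mem j)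
    (by simp [killGen_of_ne h])

end FreeLieAlgebra

section Presentation

variable {S : Type} [Fintype S] [DecidableEq S]

lemma X_eq_mkHom (a b : S) : X S a b = (pIdeal S).mkHom (XF S a b) := rfl

lemma mkHom_eq_zero_of_mem_pRel {w : FL S} (h : w ∈ pRel S) : (pIdeal S).mkHom w = 0 :=
  LieIdeal.mkHom_eq_zero.2 (LieSubmodule.subset_lieSpan h)

@[simp]
lemma X_self (a : S) : X S a a = 0 :=
  mkHom_eq_zero_of_mem_pRel (Or.inl (Or.inl (Or.inl ⟨a, rfl⟩)))

lemma X_symm (a b : S) : X S a b = X S b a := by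
  rw [← sub_eq_zero, X_eq_mkHom, X_eq_mkHom, ← map_sub]
  exact mkHom_eq_zero_of_mem_pRel (Or.inl (Or.inl (Or.inr ⟨a, b, rfl⟩)))

lemma sum_X (a : S) : ∑ b, X S a b = 0 := by
  have h := mkHom_eq_zero_of_mem_pRel (S := S) (Or.inl (Or.inr ⟨a, rfl⟩))
  rwa [map_sum, Finset.filter_ne', Finset.sum_erase_eq_sub (Finset.mem_univ a), ← X_eq_mkHom,
    X_self, sub_zero] at h

lemma lie_X_X_eq_zero {a b c d : S} (hab : a ≠ b) (hac : a ≠ c) (had : a ≠ d) (hbc : b ≠ c)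
    (hbd : b ≠ d) (hcd : c ≠ d) : ⁅X S a b, X S c d⁆ = 0 := by
  rw [X_eq_mkHom, X_eq_mkHom, ← LieHom.map_lie]
  exact mkHom_eq_zero_of_mem_pRel (Or.inr ⟨a, b, c, d, hab, hac, had, hbc, hbd, hcd, rfl⟩)

/-- The 4T relation: `X i k + X j k = -∑_{l ∉ {i, j}} X k l`, and each such `X k l` commutes
with `X i j`. -/
lemma lie_X_add_X_eq_zero {i j k : S} (hij : i ≠ j) (hik : i ≠ k) (hjk : j ≠ k) :
    ⁅X S i j, X S i k + X S j k⁆ = 0 := by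
  have h : ∑ l, ⁅X S i j, X S k l⁆ = ⁅X S i j, X S k i⁆ + ⁅X S i j, X S k j⁆ := by
    refine Fintype.sum_eq_add i j hij fun l ⟨hli, hlj⟩ => ?_
    rcases eq_or_ne l k with rfl | hlk
    · rw [X_self, lie_zero]
    · exact lie_X_X_eq_zero hij hik (Ne.symm hli) hjk (Ne.symm hlj) (Ne.symm hlk)
  rw [← lie_sum, sum_X, lie_zero, X_symm k i, X_symm k j, ← lie_add] at h
  exact h.symm

lemma P.hom_ext {L : Type*} [LieRing L] [LieAlgebra ℂ L] {f g : P S →ₗ⁅ℂ⁆ L}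
    (h : ∀ a b, f (X S a b) = g (X S a b)) : f = g :=
  LieIdeal.quotient_hom_ext (FreeLieAlgebra.hom_ext fun p => h p.1 p.2)

lemma lieSpan_range_X :
    LieSubalgebra.lieSpan ℂ (P S) (Set.range fun p : S × S => X S p.1 p.2) = ⊤ := by
  have h := LieSubalgebra.map_lieSpan (f := (pIdeal S).mkHom)
    (s := Set.range (FreeLieAlgebra.of ℂ))
  rw [FreeLieAlgebra.lieSpan_range_of, ← Set.range_comp, ← LieSubalgebra.map_top,
    (LieHom.range_eq_top _).2 LieIdeal.mkHom_surjective] at h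
  exact h.symm

variable {L : Type*} [LieRing L] [LieAlgebra ℂ L]

noncomputable def P.lift (f : S → S → L) (h_self : ∀ a, f a a = 0)
    (h_symm : ∀ a b, f a b = f b a) (h_sum : ∀ a, ∑ b, f a b = 0)
    (h_comm : ∀ a b c d, a ≠ b → a ≠ c → a ≠ d → b ≠ c → b ≠ d → c ≠ d → ⁅f a b, f c d⁆ = 0) :
    P S →ₗ⁅ℂ⁆ L :=
  (pIdeal S).quotientLift (FreeLieAlgebra.lift ℂ fun p => f p.1 p.2) <| by
    refine LieSubmodule.lieSpan_le.2 fun w hw => LieHom.mem_ker.2 ?_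
    rcases hw with ((⟨a, rfl⟩ | ⟨a, b, rfl⟩) | ⟨a, rfl⟩) |
      ⟨a, b, c, d, hab, hac, had, hbc, hbd, hcd, rfl⟩
    · simp [XF, h_self]
    · simp [XF, h_symm a b]
    · simp [XF, Finset.filter_ne', Finset.sum_erase_eq_sub, h_sum, h_self]
    · simp [XF, h_comm a b c d hab hac had hbc hbd hcd]

@[simp]
lemma P.lift_X (f : S → S → L) (h_self h_symm h_sum h_comm) (a b : S) :
    P.lift f h_self h_symm h_sum h_comm (X S a b) = f a b :=
  FreeLieAlgebra.lift_of_apply _ (a, b)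

end Presentation

section StrandIdeal

variable {S : Type} [Fintype S] [DecidableEq S]

noncomputable def strandSub (t : S) : LieSubalgebra ℂ (P S) :=
  LieSubalgebra.lieSpan ℂ (P S) (Set.range (X S t))

lemma X_mem_strandSub (t v : S) : X S t v ∈ strandSub t :=
  LieSubalgebra.subset_lieSpan ⟨v, rfl⟩

lemma lie_X_X_mem_strandSub_of_shared {t v b : S} (hvt : v ≠ t) (hbt : b ≠ t) (hvb : v ≠ b) :
    ⁅X S v b, X S t v⁆ ∈ strandSub t := by
  -- by 4T, `⁅X v b, X t v⁆ = ⁅X t v, X t b⁆`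
  have h4T := lie_X_add_X_eq_zero (S := S) hvt.symm hbt.symm hvb
  rw [lie_add] at h4T
  rw [← lie_skew, ← eq_neg_of_add_eq_zero_left h4T]
  exact (strandSub t).lie_mem (X_mem_strandSub t v) (X_mem_strandSub t b)

lemma lie_X_X_mem_strandSub (t a b v : S) : ⁅X S a b, X S t v⁆ ∈ strandSub t := by
  rcases eq_or_ne a t with rfl | hat
  · exact (strandSub a).lie_mem (X_mem_strandSub a b) (X_mem_strandSub a v)
  rcases eq_or_ne b t with rfl | hbt
  · rw [X_symm a b]
    exact (strandSub b).lie_mem (X_mem_strandSub b a) (X_mem_strandSub b v)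
  rcases eq_or_ne a b with rfl | hab
  · simp
  rcases eq_or_ne v a with rfl | hva
  · exact lie_X_X_mem_strandSub_of_shared hat hbt hab
  rcases eq_or_ne v b with rfl | hvb
  · rw [X_symm a v]
    exact lie_X_X_mem_strandSub_of_shared hbt hat hab.symm
  rcases eq_or_ne v t with rfl | hvt
  · simp
  rw [lie_X_X_eq_zero hab hat (Ne.symm hva) hbt (Ne.symm hvb) hvt.symm]
  exact zero_mem _

lemma lie_mem_strandSub (t : S) (g : P S) {u : P S} (hu : u ∈ strandSub t) :
    ⁅g, u⁆ ∈ strandSub t := by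
  suffices h : (⊤ : LieSubalgebra ℂ (P S)) ≤ (strandSub t).normalizer from
    ((strandSub t).mem_normalizer_iff g).1 (h trivial) u hu
  rw [← lieSpan_range_X, LieSubalgebra.lieSpan_le]
  rintro _ ⟨⟨a, b⟩, rfl⟩
  refine ((strandSub t).mem_normalizer_iff _).2 fun y hy => ?_
  induction hy using LieSubalgebra.lieSpan_induction with
  | mem y hy => obtain ⟨v, rfl⟩ := hy; exact lie_X_X_mem_strandSub t a b v
  | zero => simp
  | add y z _ _ hy hz => rw [lie_add]; exact add_mem hy hz
  | smul r y _ hy => rw [lie_smul]; exact (strandSub t).smul_mem r hy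
  | lie y z hy' hz' hy hz =>
    rw [leibniz_lie]
    exact add_mem ((strandSub t).lie_mem hy hz') ((strandSub t).lie_mem hy' hz)

noncomputable def strandIdeal (t : S) : LieIdeal ℂ (P S) :=
  { (strandSub t).toSubmodule with lie_mem := fun {g _} hu => lie_mem_strandSub t g hu }

lemma mem_strandIdeal {t : S} {u : P S} : u ∈ strandIdeal t ↔ u ∈ strandSub t := Iff.rfl

/-- Modulo `strandIdeal t` the row sum of `a` loses its `X a t` term, so the `X a b` with
`a, b ≠ t` satisfy the relations of `P (S ∖ {t})`. -/
noncomputable def strandIdealQuotientMap (t : S) :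
    P {s : S // s ≠ t} →ₗ⁅ℂ⁆ P S ⧸ strandIdeal t :=
  P.lift (fun a b => (strandIdeal t).mkHom (X S a b)) (fun a => by simp)
    (fun a b => by rw [X_symm])
    (fun a => by
      have hsum :=
        Fintype.sum_eq_add_sum_subtype_ne (fun s => (strandIdeal t).mkHom (X S a s)) t
      have hat : (strandIdeal t).mkHom (X S a t) = 0 := by
        rw [LieIdeal.mkHom_eq_zero, mem_strandIdeal, X_symm]
        exact X_mem_strandSub t a
      rwa [← map_sum, sum_X, map_zero, hat, zero_add, eq_comm] at hsum)
    (fun a b c d hab hac had hbc hbd hcd => by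
      rw [← LieHom.map_lie, lie_X_X_eq_zero (Subtype.coe_ne_coe.2 hab)
        (Subtype.coe_ne_coe.2 hac) (Subtype.coe_ne_coe.2 had) (Subtype.coe_ne_coe.2 hbc)
        (Subtype.coe_ne_coe.2 hbd) (Subtype.coe_ne_coe.2 hcd), map_zero])

lemma ker_eq_strandIdeal (t : S) (π : P S →ₗ⁅ℂ⁆ P {s : S // s ≠ t})
    (h0 : ∀ v : S, v ≠ t → π (X S t v) = 0)
    (h : ∀ (a b : S) (ha : a ≠ t) (hb : b ≠ t), π (X S a b) = X _ ⟨a, ha⟩ ⟨b, hb⟩) :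
    π.ker = strandIdeal t := by
  have hX : ∀ v, π (X S t v) = 0 := fun v => by
    rcases eq_or_ne v t with rfl | hv
    · simp
    · exact h0 v hv
  have hcomp : (strandIdealQuotientMap t).comp π = (strandIdeal t).mkHom := by
    refine P.hom_ext fun a b => ?_
    have hmk : ∀ v, (strandIdeal t).mkHom (X S t v) = 0 := fun v =>
      LieIdeal.mkHom_eq_zero.2 (X_mem_strandSub t v)
    rcases eq_or_ne a t with rfl | ha
    · simp [hX, hmk]
    rcases eq_or_ne b t with rfl | hb
    · simp [X_symm a b, hX, hmk]
    · simp [h a b ha hb, strandIdealQuotientMap]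
  have hsub : ∀ u ∈ strandSub t, π u = 0 := fun u hu => by
    induction hu using LieSubalgebra.lieSpan_induction with
    | mem y hy => obtain ⟨v, rfl⟩ := hy; exact hX v
    | zero => simp
    | add y z _ _ hy hz => rw [map_add, hy, hz, add_zero]
    | smul r y _ hy => rw [map_smul, hy, smul_zero]
    | lie y z _ _ hy hz => rw [LieHom.map_lie, hy, zero_lie]
  refine le_antisymm (fun u hu => ?_) (fun u hu => LieHom.mem_ker.2 (hsub u hu))
  have hu' := LieHom.congr_fun hcomp u
  rw [LieHom.comp_apply, LieHom.mem_ker.1 hu, map_zero, eq_comm, LieIdeal.mkHom_eq_zero] at hu'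
  exact hu'

end StrandIdeal

section Klein

lemma klein_add_eq_add_of_pairwise_ne :
    ∀ a b c d : Fin 2 × Fin 2, a ≠ b → a ≠ c → a ≠ d → b ≠ c → b ≠ d → c ≠ d →
      a + b = c + d := by
  decide

lemma klein_add_self : ∀ a : Fin 2 × Fin 2, a + a = 0 := by
  decide

def kleinForm {M : Type*} [AddCommGroup M] (x y : M) (v : Fin 2 × Fin 2) : M :=
  ![![0, y], ![x, -(x + y)]] v.1 v.2

lemma sum_kleinForm {M : Type*} [AddCommGroup M] (x y : M) : ∑ v, kleinForm x y v = 0 := by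
  simp [kleinForm, Fintype.sum_prod_type]

variable {L : Type*} [LieRing L] [LieAlgebra ℂ L] {S : Type} [Fintype S] [DecidableEq S]

/-- Once `S` is identified with the Klein four-group `Fin 2 × Fin 2`, complementary pairs
`{a, b}`, `{c, d}` have the same sum, so `X a b ↦ kleinForm x y (e a + e b)` respects the
commutation relations. -/
noncomputable def P.liftKlein (e : S → Fin 2 × Fin 2) (he : Function.Bijective e) (x y : L) :
    P S →ₗ⁅ℂ⁆ L :=
  P.lift (fun a b => kleinForm x y (e a + e b)) (fun a => by rw [klein_add_self]; rfl)
    (fun a b => by rw [add_comm])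
    (fun a => by
      rw [he.sum_comp fun v => kleinForm x y (e a + v), ← sum_kleinForm x y]
      exact Equiv.sum_comp (Equiv.addLeft (e a)) (kleinForm x y))
    (fun a b c d hab hac had hbc hbd hcd => by
      rw [klein_add_eq_add_of_pairwise_ne _ _ _ _ (he.1.ne hab) (he.1.ne hac) (he.1.ne had)
        (he.1.ne hbc) (he.1.ne hbd) (he.1.ne hcd), lie_self])

@[simp]
lemma P.liftKlein_X (e : S → Fin 2 × Fin 2) (he : Function.Bijective e) (x y : L) (a b : S) :
    P.liftKlein e he x y (X S a b) = kleinForm x y (e a + e b) :=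
  P.lift_X _ _ _ _ _ a b

end Klein

section Strands

open Strand

lemma sum_X_strand (a : Strand) :
    X Strand a alpha + X Strand a one + X Strand a two + X Strand a beta + X Strand a omega =
      0 := by
  rw [← sum_X a]
  simp [Finset.univ, Fintype.elems, add_assoc]

lemma Xbw_eq : Xbw = X Strand beta omega := by
  have hα := sum_X_strand alpha
  have h1 := sum_X_strand one
  have h2 := sum_X_strand two
  have hβ := sum_X_strand beta
  have hω := sum_X_strand omega
  simp only [X_self, X_symm one alpha, X_symm two alpha, X_symm two one, X_symm beta alpha,
    X_symm beta one, X_symm beta two, X_symm omega alpha, X_symm omega one, X_symm omega two,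
    X_symm omega beta] at hα h1 h2 hβ hω
  rw [Xbw]
  linear_combination (norm := module) (2⁻¹ : ℂ) • (hα + h1 + h2 - hβ - hω)

lemma X_beta_mem_f3Sub (v : Strand) : X Strand beta v ∈ f3Sub := by
  have h1 : X Strand beta one ∈ f3Sub := X_symm one beta ▸ LieSubalgebra.subset_lieSpan (by simp)
  have h2 : X Strand beta two ∈ f3Sub := X_symm two beta ▸ LieSubalgebra.subset_lieSpan (by simp)
  have hω : X Strand beta omega ∈ f3Sub := Xbw_eq ▸ LieSubalgebra.subset_lieSpan (by simp)
  cases v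
  · have hβ := sum_X_strand beta
    rw [X_self] at hβ
    have hα : X Strand beta alpha =
        -(X Strand beta one + X Strand beta two + X Strand beta omega) := by
      linear_combination (norm := module) hβ
    rw [hα]
    exact neg_mem (add_mem (add_mem h1 h2) hω)
  · exact h1
  · exact h2
  · simp
  · exact hω

lemma f3Sub_eq_strandSub : f3Sub = strandSub beta := by
  refine le_antisymm (LieSubalgebra.lieSpan_le.2 ?_) (LieSubalgebra.lieSpan_le.2 ?_)
  · rintro _ (rfl | rfl | rfl)
    · exact X_symm beta one ▸ X_mem_strandSub beta one
    · exact X_symm beta two ▸ X_mem_strandSub beta two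
    · exact Xbw_eq ▸ X_mem_strandSub beta omega
  · rintro _ ⟨v, rfl⟩
    exact X_beta_mem_f3Sub v

end Strands

section FreeParametrization

open Strand FreeLieAlgebra

lemma Xbw_mem_f3Sub : Xbw ∈ f3Sub := LieSubalgebra.subset_lieSpan (by simp)

noncomputable def f3Param : FreeLieAlgebra ℂ (Fin 3) →ₗ⁅ℂ⁆ f3Sub :=
  lift ℂ ![X1b, X2b, ⟨Xbw, Xbw_mem_f3Sub⟩]

@[simp] lemma f3Param_of_zero : f3Param (of ℂ 0) = X1b := lift_of_apply _ _
@[simp] lemma f3Param_of_one : f3Param (of ℂ 1) = X2b := lift_of_apply _ _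
@[simp] lemma f3Param_of_two : f3Param (of ℂ 2) = ⟨Xbw, Xbw_mem_f3Sub⟩ := lift_of_apply _ _

lemma f3Param_surjective : Function.Surjective f3Param := by
  have h : f3Sub ≤ (f3Sub.incl.comp f3Param).range := by
    refine LieSubalgebra.lieSpan_le.2 ?_
    rintro _ (rfl | rfl | rfl)
    · exact ⟨of ℂ 0, by simp [X1b]⟩
    · exact ⟨of ℂ 1, by simp [X2b]⟩
    · exact ⟨of ℂ 2, by simp⟩
  intro u
  obtain ⟨w, hw⟩ := h u.2
  exact ⟨w, Subtype.ext hw⟩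

lemma map_f3Param_le_lam :
    LieIdeal.map f3Param
      ⁅LieSubmodule.lieSpan ℂ (FreeLieAlgebra ℂ (Fin 3)) {of ℂ (0 : Fin 3)},
        LieSubmodule.lieSpan ℂ (FreeLieAlgebra ℂ (Fin 3)) {of ℂ (1 : Fin 3)}⁆ ≤ lam := by
  refine (LieIdeal.map_bracket_le f3Param).trans (LieSubmodule.mono_lie ?_ ?_) <;>
  refine (LieIdeal.map_lieSpan_le _ _).trans ?_ <;>
  simp

/-- Bijective on `S ∖ {1}` and on `S ∖ {2}`; the pairs `{2, β}`, `{1, β}` sum to `(0, 1)` and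
`{α, 2}`, `{α, 1}` to `(1, 0)`. -/
def kleinLabel : Strand → Fin 2 × Fin 2
  | alpha => (0, 0)
  | one => (1, 0)
  | two => (1, 0)
  | beta => (1, 1)
  | omega => (0, 1)

noncomputable def freeOfP4One : P4 one →ₗ⁅ℂ⁆ FreeLieAlgebra ℂ (Fin 3) :=
  P.liftKlein (fun s => kleinLabel s) (by decide) (of ℂ 2) (of ℂ 1)

noncomputable def freeOfP4Two : P4 two →ₗ⁅ℂ⁆ FreeLieAlgebra ℂ (Fin 3) :=
  P.liftKlein (fun s => kleinLabel s) (by decide) (of ℂ 2) (of ℂ 0)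

lemma freeOfP4One_comp (π₁ : P5 →ₗ⁅ℂ⁆ P4 one)
    (hπ₁0 : ∀ v : Strand, v ≠ one → π₁ (X Strand one v) = 0)
    (hπ₁ : ∀ (a b : Strand) (ha : a ≠ one) (hb : b ≠ one),
      π₁ (X Strand a b) = X _ ⟨a, ha⟩ ⟨b, hb⟩) :
    freeOfP4One.comp (π₁.comp (f3Sub.incl.comp f3Param)) = killGen 0 := by
  refine hom_ext fun i => ?_
  fin_cases i
  · simp [X1b, hπ₁0, killGen_of_self]
  · simp [X2b, hπ₁, freeOfP4One, kleinLabel, kleinForm, killGen_of_ne]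
  · simp [Xbw, X_symm alpha one, hπ₁0, hπ₁, freeOfP4One, kleinLabel, kleinForm,
      killGen_of_ne]

lemma freeOfP4Two_comp (π₂ : P5 →ₗ⁅ℂ⁆ P4 two)
    (hπ₂0 : ∀ v : Strand, v ≠ two → π₂ (X Strand two v) = 0)
    (hπ₂ : ∀ (a b : Strand) (ha : a ≠ two) (hb : b ≠ two),
      π₂ (X Strand a b) = X _ ⟨a, ha⟩ ⟨b, hb⟩) :
    freeOfP4Two.comp (π₂.comp (f3Sub.incl.comp f3Param)) = killGen 1 := by
  refine hom_ext fun i => ?_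
  fin_cases i
  · simp [X1b, hπ₂, freeOfP4Two, kleinLabel, kleinForm, killGen_of_ne]
  · simp [X2b, hπ₂0, killGen_of_self]
  · simp [Xbw, X_symm alpha two, X_symm one two, hπ₂0, hπ₂, freeOfP4Two, kleinLabel, kleinForm,
      killGen_of_ne]

end FreeParametrization

/-- `λ = ker(π₁) ∩ ker(π₂) ∩ ker(π_β)`, where for `t ∈ {1, 2, β}` the morphism
`π_t : p₅ → p₄` sends `X_{tv} ↦ 0` for `v ≠ t` and `X_{ab} ↦ X_{ab}` for `a, b ≠ t`. -/
theorem lam_eq_triple_kernel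
    (π₁ : P5 →ₗ⁅ℂ⁆ P4 Strand.one) (π₂ : P5 →ₗ⁅ℂ⁆ P4 Strand.two)
    (πβ : P5 →ₗ⁅ℂ⁆ P4 Strand.beta)
    (hπ₁0 : ∀ v : Strand, v ≠ Strand.one → π₁ (X Strand Strand.one v) = 0)
    (hπ₁ : ∀ (a b : Strand) (ha : a ≠ Strand.one) (hb : b ≠ Strand.one),
      π₁ (X Strand a b) = X _ ⟨a, ha⟩ ⟨b, hb⟩)
    (hπ₂0 : ∀ v : Strand, v ≠ Strand.two → π₂ (X Strand Strand.two v) = 0)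
    (hπ₂ : ∀ (a b : Strand) (ha : a ≠ Strand.two) (hb : b ≠ Strand.two),
      π₂ (X Strand a b) = X _ ⟨a, ha⟩ ⟨b, hb⟩)
    (hπβ0 : ∀ v : Strand, v ≠ Strand.beta → πβ (X Strand Strand.beta v) = 0)
    (hπβ : ∀ (a b : Strand) (ha : a ≠ Strand.beta) (hb : b ≠ Strand.beta),
      πβ (X Strand a b) = X _ ⟨a, ha⟩ ⟨b, hb⟩) :
    Subtype.val '' (lam : Set ↥f3Sub) =
      (π₁.ker : Set P5) ∩ (π₂.ker : Set P5) ∩ (πβ.ker : Set P5) := by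
  have hf3 : ∀ u, u ∈ f3Sub ↔ u ∈ πβ.ker := fun u => by
    rw [ker_eq_strandIdeal Strand.beta πβ hπβ0 hπβ, mem_strandIdeal, f3Sub_eq_strandSub]
  have hX1b : LieSubmodule.lieSpan ℂ f3Sub {X1b} ≤ (π₁.comp f3Sub.incl).ker := by
    simpa [LieSubmodule.lieSpan_le, X1b] using hπ₁0 Strand.beta (by decide)
  have hX2b : LieSubmodule.lieSpan ℂ f3Sub {X2b} ≤ (π₂.comp f3Sub.incl).ker := by
    simpa [LieSubmodule.lieSpan_le, X2b] using hπ₂0 Strand.beta (by decide)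
  ext u
  constructor
  · rintro ⟨m, hm, rfl⟩
    exact ⟨⟨hX1b (LieSubmodule.lie_le_left _ _ hm), hX2b (LieSubmodule.lie_le_right _ _ hm)⟩,
      (hf3 m).1 m.2⟩
  · rintro ⟨⟨h1, h2⟩, h3⟩
    obtain ⟨w, hw⟩ := f3Param_surjective ⟨u, (hf3 u).2 h3⟩
    have ha : w ∈ LieSubmodule.lieSpan ℂ (FreeLieAlgebra ℂ (Fin 3)) {FreeLieAlgebra.of ℂ 0} := by
      rw [← FreeLieAlgebra.ker_killGen, ← freeOfP4One_comp π₁ hπ₁0 hπ₁]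
      simp [hw, LieHom.mem_ker.1 h1]
    have hb : w ∈ LieSubmodule.lieSpan ℂ (FreeLieAlgebra ℂ (Fin 3)) {FreeLieAlgebra.of ℂ 1} := by
      rw [← FreeLieAlgebra.ker_killGen, ← freeOfP4Two_comp π₂ hπ₂0 hπ₂]
      simp [hw, LieHom.mem_ker.1 h2]
    refine ⟨f3Param w, map_f3Param_le_lam (LieIdeal.mem_map ?_), by rw [hw]⟩
    exact FreeLieAlgebra.lieSpan_of_inf_le_lie (by decide) ⟨ha, hb⟩
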